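/- Let v, w, c ∈ Q and let 1 ≤ i, k, p ≤ m with k ≠ p. Then the triple commutator [E*_{i,v}, [E_{k,w}, E*_{p,c}]] acts on M as follows: (1) if i = k, it sends (z,x,f) to (z + f_p(x)·⟨c,w⟩·v, x, f − (⟨v,z⟩ + f_k(x)·q(v) + f_p(x)·⟨c,w⟩·q(v))·⟨c,w⟩·f_p + f_p(x)·⟨c,w⟩·q(v)·f_k); (2) if i ≠ k (in particular if i = p), it is the identity automorphism of M. -/

import Mathlib

open QuadraticMap
open scoped commutatorElement

/-- The DSER elementary orthogonal transformation `E_{i,w}` on `M = Q ⊕ P ⊕ P*`,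
`P = A^m`:  `E_{i,w}(z,x,f) = (z − f(xᵢ)•w, x + ⟨w,z⟩•xᵢ − f(xᵢ)·q(w)•xᵢ, f)`. -/
noncomputable def Eplus {A Q : Type*} [CommRing A] [AddCommGroup Q] [Module A Q]
    {m : ℕ} (q : QuadraticForm A Q) (i : Fin m) (w : Q) :
    (Q × (Fin m → A) × (Fin m → A)) ≃ₗ[A] (Q × (Fin m → A) × (Fin m → A)) where
  toFun p := (p.1 - p.2.2 i • w,
    p.2.1 + polar ⇑q w p.1 • (Pi.single i 1 : Fin m → A)
      - (p.2.2 i * q w) • (Pi.single i 1 : Fin m → A),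
    p.2.2)
  invFun p := (p.1 + p.2.2 i • w,
    p.2.1 - polar ⇑q w p.1 • (Pi.single i 1 : Fin m → A)
      - (p.2.2 i * q w) • (Pi.single i 1 : Fin m → A),
    p.2.2)
  map_add' p p' := by
    obtain ⟨z, x, f⟩ := p
    obtain ⟨z', x', f'⟩ := p'
    refine Prod.ext ?_ (Prod.ext ?_ rfl)
    · show z + z' - (f i + f' i) • w = (z - f i • w) + (z' - f' i • w)
      module
    · show x + x' + polar ⇑q w (z + z') • (Pi.single i 1 : Fin m → A)
        - ((f i + f' i) * q w) • (Pi.single i 1 : Fin m → A) = _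
      rw [polar_add_right]
      show _ = (x + polar ⇑q w z • (Pi.single i 1 : Fin m → A) - (f i * q w) • (Pi.single i 1 : Fin m → A))
        + (x' + polar ⇑q w z' • (Pi.single i 1 : Fin m → A) - (f' i * q w) • (Pi.single i 1 : Fin m → A))
      module
  map_smul' a p := by
    obtain ⟨z, x, f⟩ := p
    refine Prod.ext ?_ (Prod.ext ?_ rfl)
    · show a • z - (a • f) i • w = a • (z - f i • w)
      simp only [Pi.smul_apply, smul_eq_mul]
      module
    · show a • x + polar ⇑q w (a • z) • (Pi.single i 1 : Fin m → A)
        - ((a • f) i * q w) • (Pi.single i 1 : Fin m → A)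
        = a • (x + polar ⇑q w z • (Pi.single i 1 : Fin m → A) - (f i * q w) • (Pi.single i 1 : Fin m → A))
      rw [polar_smul_right]
      simp only [Pi.smul_apply, smul_eq_mul]
      module
  left_inv p := by
    obtain ⟨z, x, f⟩ := p
    refine Prod.ext ?_ (Prod.ext ?_ rfl)
    · show z - f i • w + f i • w = z
      module
    · show x + polar ⇑q w z • (Pi.single i 1 : Fin m → A) - (f i * q w) • (Pi.single i 1 : Fin m → A)
        - polar ⇑q w (z - f i • w) • (Pi.single i 1 : Fin m → A)
        - (f i * q w) • (Pi.single i 1 : Fin m → A) = x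
      rw [polar_sub_right, polar_smul_right, polar_self]
      simp only [smul_eq_mul]
      module
  right_inv p := by
    obtain ⟨z, x, f⟩ := p
    refine Prod.ext ?_ (Prod.ext ?_ rfl)
    · show z + f i • w - f i • w = z
      module
    · show x - polar ⇑q w z • (Pi.single i 1 : Fin m → A) - (f i * q w) • (Pi.single i 1 : Fin m → A)
        + polar ⇑q w (z + f i • w) • (Pi.single i 1 : Fin m → A)
        - (f i * q w) • (Pi.single i 1 : Fin m → A) = x
      rw [polar_add_right, polar_smul_right, polar_self]
      simp only [smul_eq_mul]
      module

/-- The DSER elementary orthogonal transformation `E*_{i,w}` on `M = Q ⊕ P ⊕ P*`: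
`E*_{i,w}(z,x,f) = (z − fᵢ(x)•w, x, f + ⟨w,z⟩•fᵢ − fᵢ(x)·q(w)•fᵢ)`. -/
noncomputable def Estar {A Q : Type*} [CommRing A] [AddCommGroup Q] [Module A Q]
    {m : ℕ} (q : QuadraticForm A Q) (i : Fin m) (w : Q) :
    (Q × (Fin m → A) × (Fin m → A)) ≃ₗ[A] (Q × (Fin m → A) × (Fin m → A)) where
  toFun p := (p.1 - p.2.1 i • w,
    p.2.1,
    p.2.2 + polar ⇑q w p.1 • (Pi.single i 1 : Fin m → A)
      - (p.2.1 i * q w) • (Pi.single i 1 : Fin m → A))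
  invFun p := (p.1 + p.2.1 i • w,
    p.2.1,
    p.2.2 - polar ⇑q w p.1 • (Pi.single i 1 : Fin m → A)
      - (p.2.1 i * q w) • (Pi.single i 1 : Fin m → A))
  map_add' p p' := by
    obtain ⟨z, x, f⟩ := p
    obtain ⟨z', x', f'⟩ := p'
    refine Prod.ext ?_ (Prod.ext rfl ?_)
    · show z + z' - (x i + x' i) • w = (z - x i • w) + (z' - x' i • w)
      module
    · show f + f' + polar ⇑q w (z + z') • (Pi.single i 1 : Fin m → A)
        - ((x i + x' i) * q w) • (Pi.single i 1 : Fin m → A) = _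
      rw [polar_add_right]
      show _ = (f + polar ⇑q w z • (Pi.single i 1 : Fin m → A)
          - (x i * q w) • (Pi.single i 1 : Fin m → A))
        + (f' + polar ⇑q w z' • (Pi.single i 1 : Fin m → A)
          - (x' i * q w) • (Pi.single i 1 : Fin m → A))
      module
  map_smul' a p := by
    obtain ⟨z, x, f⟩ := p
    refine Prod.ext ?_ (Prod.ext rfl ?_)
    · show a • z - (a • x) i • w = a • (z - x i • w)
      simp only [Pi.smul_apply, smul_eq_mul]
      module
    · show a • f + polar ⇑q w (a • z) • (Pi.single i 1 : Fin m → A)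
        - ((a • x) i * q w) • (Pi.single i 1 : Fin m → A)
        = a • (f + polar ⇑q w z • (Pi.single i 1 : Fin m → A)
          - (x i * q w) • (Pi.single i 1 : Fin m → A))
      rw [polar_smul_right]
      simp only [Pi.smul_apply, smul_eq_mul]
      module
  left_inv p := by
    obtain ⟨z, x, f⟩ := p
    refine Prod.ext ?_ (Prod.ext rfl ?_)
    · show z - x i • w + x i • w = z
      module
    · show f + polar ⇑q w z • (Pi.single i 1 : Fin m → A)
        - (x i * q w) • (Pi.single i 1 : Fin m → A)
        - polar ⇑q w (z - x i • w) • (Pi.single i 1 : Fin m → A)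
        - (x i * q w) • (Pi.single i 1 : Fin m → A) = f
      rw [polar_sub_right, polar_smul_right, polar_self]
      simp only [smul_eq_mul]
      module
  right_inv p := by
    obtain ⟨z, x, f⟩ := p
    refine Prod.ext ?_ (Prod.ext rfl ?_)
    · show z + x i • w - x i • w = z
      module
    · show f - polar ⇑q w z • (Pi.single i 1 : Fin m → A)
        - (x i * q w) • (Pi.single i 1 : Fin m → A)
        + polar ⇑q w (z + x i • w) • (Pi.single i 1 : Fin m → A)
        - (x i * q w) • (Pi.single i 1 : Fin m → A) = f
      rw [polar_add_right, polar_smul_right, polar_self]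
      simp only [smul_eq_mul]
      module

/-! For `k ≠ p` the inner commutator `[E_{k,w}, E*_{p,c}]` fixes `Q` and is the transvection
`x ↦ x − x_p ⟨w,c⟩ e_k`, `f ↦ f + f_k ⟨w,c⟩ e_p` of the hyperbolic part. Since `E*_{i,v}` reads
`x` only through `x_i` and changes `f` only in its `i`-th coordinate, it commutes with this
transvection unless `i = k`; in that case the triple commutator is computed directly. -/

section

variable {A Q : Type*} [CommRing A] [AddCommGroup Q] [Module A Q] {m : ℕ}
  (q : QuadraticForm A Q)

section Formulas

variable (i : Fin m) (w z : Q) (x f : Fin m → A)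

@[simp]
theorem Eplus_apply : Eplus q i w (z, x, f) = (z - f i • w,
    x + polar q w z • Pi.single i 1 - (f i * q w) • Pi.single i 1, f) := rfl

@[simp]
theorem Eplus_symm_apply : (Eplus q i w).symm (z, x, f) = (z + f i • w,
    x - polar q w z • Pi.single i 1 - (f i * q w) • Pi.single i 1, f) := rfl

@[simp]
theorem Estar_apply : Estar q i w (z, x, f) = (z - x i • w, x,
    f + polar q w z • Pi.single i 1 - (x i * q w) • Pi.single i 1) := rfl

@[simp]
theorem Estar_symm_apply : (Estar q i w).symm (z, x, f) = (z + x i • w, x,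
    f - polar q w z • Pi.single i 1 - (x i * q w) • Pi.single i 1) := rfl

end Formulas

variable {k p : Fin m} (hkp : k ≠ p) (w c : Q)
include hkp

theorem commutatorElement_Eplus_Estar_apply (z : Q) (x f : Fin m → A) :
    ⁅Eplus q k w, Estar q p c⁆ (z, x, f) = (z,
      x - (x p * polar q w c) • Pi.single k 1, f + (f k * polar q w c) • Pi.single p 1) := by
  simp only [commutatorElement_def, LinearEquiv.mul_apply, LinearEquiv.coe_inv, Estar_symm_apply,
    Eplus_symm_apply, Eplus_apply, Estar_apply, Pi.add_apply, Pi.sub_apply, Pi.smul_apply,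
    Pi.single_eq_of_ne hkp, Pi.single_eq_of_ne hkp.symm, smul_eq_mul, mul_zero, add_zero, sub_zero,
    polar_add_right, polar_sub_right, polar_smul_right, polar_self, nsmul_eq_mul, Nat.cast_ofNat,
    polar_comm q c w, Prod.mk.injEq]
  refine ⟨?_, ?_, ?_⟩ <;> module

theorem commutatorElement_Eplus_Estar_symm_apply (z : Q) (x f : Fin m → A) :
    ⁅Eplus q k w, Estar q p c⁆.symm (z, x, f) = (z,
      x + (x p * polar q w c) • Pi.single k 1, f - (f k * polar q w c) • Pi.single p 1) := by
  rw [LinearEquiv.symm_apply_eq, commutatorElement_Eplus_Estar_apply q hkp]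
  simp [Pi.single_eq_of_ne hkp, Pi.single_eq_of_ne hkp.symm]

theorem commute_Estar_commutatorElement_Eplus_Estar {i : Fin m} (hik : i ≠ k) (v : Q) :
    Commute (Estar q i v) ⁅Eplus q k w, Estar q p c⁆ := by
  refine LinearEquiv.ext fun ⟨z, x, f⟩ => ?_
  simp only [LinearEquiv.mul_apply, commutatorElement_Eplus_Estar_apply q hkp, Estar_apply,
    Pi.add_apply, Pi.sub_apply, Pi.smul_apply, Pi.single_eq_of_ne hik, Pi.single_eq_of_ne hik.symm,
    smul_eq_mul, mul_zero, add_zero, sub_zero, Prod.mk.injEq, true_and]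
  module

end

theorem triple_commutator_Estar_EplusEstar_general
    {A Q : Type*} [CommRing A] [AddCommGroup Q] [Module A Q]
    {m : ℕ} (q : QuadraticForm A Q) (i k p : Fin m) (hkp : k ≠ p)
    (v w c : Q) :
    (i = k → ∀ (z : Q) (x f : Fin m → A),
      ⁅Estar q i v, ⁅Eplus q k w, Estar q p c⁆⁆ (z, x, f)
        = (z + (x p * polar ⇑q c w) • v,
           x,
           f - ((polar ⇑q v z + x k * q v + x p * polar ⇑q c w * q v)
               * polar ⇑q c w) • (Pi.single p 1 : Fin m → A)
             + (x p * polar ⇑q c w * q v) • (Pi.single k 1 : Fin m → A))) ∧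
    (i ≠ k → ⁅Estar q i v, ⁅Eplus q k w, Estar q p c⁆⁆ = 1) := by
  refine ⟨?_, fun hik => commutatorElement_eq_one_iff_commute.mpr
    (commute_Estar_commutatorElement_Eplus_Estar q hkp w c hik v)⟩
  rintro rfl z x f
  rw [commutatorElement_def]
  simp only [LinearEquiv.mul_apply, LinearEquiv.coe_inv,
    commutatorElement_Eplus_Estar_symm_apply q hkp, Estar_symm_apply,
    commutatorElement_Eplus_Estar_apply q hkp, Estar_apply]
  simp only [Pi.add_apply, Pi.sub_apply, Pi.smul_apply, Pi.single_eq_same,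
    Pi.single_eq_of_ne hkp, Pi.single_eq_of_ne hkp.symm, smul_eq_mul, mul_one, mul_zero, add_zero,
    sub_zero, add_sub_cancel_right, polar_add_right, polar_smul_right, polar_self, nsmul_eq_mul,
    Nat.cast_ofNat, polar_comm q c w, Prod.mk.injEq, true_and]
  refine ⟨?_, ?_⟩ <;> module

theorem triple_commutator_Estar_EplusEstar
    {A Q : Type*} [CommRing A] [Invertible (2 : A)] [AddCommGroup Q] [Module A Q]
    {m : ℕ} (q : QuadraticForm A Q) (i k p : Fin m) (hkp : k ≠ p)
    (v w c : Q) :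
    (i = k → ∀ (z : Q) (x f : Fin m → A),
      ⁅Estar q i v, ⁅Eplus q k w, Estar q p c⁆⁆ (z, x, f)
        = (z + (x p * polar ⇑q c w) • v,
           x,
           f - ((polar ⇑q v z + x k * q v + x p * polar ⇑q c w * q v)
               * polar ⇑q c w) • (Pi.single p 1 : Fin m → A)
             + (x p * polar ⇑q c w * q v) • (Pi.single k 1 : Fin m → A))) ∧
    (i ≠ k → ⁅Estar q i v, ⁅Eplus q k w, Estar q p c⁆⁆ = 1) :=
  triple_commutator_Estar_EplusEstar_general q i k p hkp v w c
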